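/- In the labelled transition system of CCS (without recursion) and the dialgebra for CCS with F(X)=X+X×X, B(X)=P(X), for all channels a and processes x, y, z: (i) x →τ y iff x → y; (ii) x →a y iff (x, ā.0) → y; (iii) x →ā y iff (x, a.0) → y; (iv) (x,y) → z iff there exist a channel b and processes x', y' with z structurally congruent to x' ∥ y' and either (x →b x' and y →b̄ y') or (x →b̄ x' and y →b y'). -/
import Mathlib


/-! CCS (without recursion): syntax, structural congruence, the labelled
transition system, and the reaction dialgebra for the interaction functor
`F(X) = X + X × X` and observation functor `B(X) = P(X)`. -/

/-- Prefixes/labels of CCS: the internal step `τ`, input `a`, output `ā`. -/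
inductive Act : Type
  | tau : Act
  | inp (a : ℕ) : Act
  | out (a : ℕ) : Act
deriving DecidableEq

/-- Free names of a prefix. -/
def fnAct : Act → Set ℕ
  | .tau => ∅
  | .inp a => {a}
  | .out a => {a}

mutual
/-- CCS processes: guarded sums, parallel composition, restriction. -/
inductive Proc : Type
  | sum : Sm → Proc
  | par : Proc → Proc → Proc
  | res : ℕ → Proc → Proc
/-- Finite guarded sums `Σ αᵢ.Pᵢ`. -/
inductive Sm : Type
  | nil : Sm
  | cons : Act → Proc → Sm → Sm
end

/-- The empty process `0`. -/
def Proc.zero : Proc := Proc.sum Sm.nil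

/-- Renaming of names in a prefix. -/
def renameAct (f : ℕ → ℕ) : Act → Act
  | .tau => .tau
  | .inp a => .inp (f a)
  | .out a => .out (f a)

mutual
/-- Renaming of names (applied by a bijection, e.g. a transposition). -/
def renameP (f : ℕ → ℕ) : Proc → Proc
  | .sum s => .sum (renameS f s)
  | .par p q => .par (renameP f p) (renameP f q)
  | .res a p => .res (f a) (renameP f p)
def renameS (f : ℕ → ℕ) : Sm → Sm
  | .nil => .nil
  | .cons α p s => .cons (renameAct f α) (renameP f p) (renameS f s)
end

mutual
/-- `FreeP a p`: the name `a` occurs free in the process `p`. -/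
inductive FreeP : ℕ → Proc → Prop
  | sum {a : ℕ} {s : Sm} : FreeS a s → FreeP a (.sum s)
  | parL {a : ℕ} {p q : Proc} : FreeP a p → FreeP a (.par p q)
  | parR {a : ℕ} {p q : Proc} : FreeP a q → FreeP a (.par p q)
  | res {a b : ℕ} {p : Proc} : a ≠ b → FreeP a p → FreeP a (.res b p)
/-- `FreeS a s`: the name `a` occurs free in the sum `s`. -/
inductive FreeS : ℕ → Sm → Prop
  | act {a : ℕ} {α : Act} {p : Proc} {s : Sm} :
      a ∈ fnAct α → FreeS a (.cons α p s)
  | headP {a : ℕ} {α : Act} {p : Proc} {s : Sm} :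
      FreeP a p → FreeS a (.cons α p s)
  | tail {a : ℕ} {α : Act} {p : Proc} {s : Sm} :
      FreeS a s → FreeS a (.cons α p s)
end

mutual
/-- Structural congruence on processes: the least congruence containing
α-conversion, the commutative-monoid laws for `∥` with unit `0`, and the
scope-extrusion laws for restriction. -/
inductive CongP : Proc → Proc → Prop
  | refl (p : Proc) : CongP p p
  | symm {p q : Proc} : CongP p q → CongP q p
  | trans {p q r : Proc} : CongP p q → CongP q r → CongP p r
  | par_congr {p p' q q' : Proc} :
      CongP p p' → CongP q q' → CongP (.par p q) (.par p' q')
  | res_congr {a : ℕ} {p p' : Proc} : CongP p p' → CongP (.res a p) (.res a p')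
  | sum_congr {s s' : Sm} : CongS s s' → CongP (.sum s) (.sum s')
  | alpha {a b : ℕ} {p : Proc} :
      ¬ FreeP b p → CongP (.res a p) (.res b (renameP (Equiv.swap a b) p))
  | par_comm (p q : Proc) : CongP (.par p q) (.par q p)
  | par_assoc (p q r : Proc) : CongP (.par (.par p q) r) (.par p (.par q r))
  | par_zero (p : Proc) : CongP (.par p Proc.zero) p
  | res_par {a : ℕ} {p q : Proc} :
      ¬ FreeP a q → CongP (.res a (.par p q)) (.par (.res a p) q)
  | res_zero (a : ℕ) : CongP (.res a Proc.zero) Proc.zero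
  | res_res (a b : ℕ) (p : Proc) : CongP (.res a (.res b p)) (.res b (.res a p))
/-- Structural congruence on sums. -/
inductive CongS : Sm → Sm → Prop
  | refl (s : Sm) : CongS s s
  | symm {s t : Sm} : CongS s t → CongS t s
  | trans {s t v : Sm} : CongS s t → CongS t v → CongS s v
  | cons_congr {α : Act} {p p' : Proc} {s s' : Sm} :
      CongP p p' → CongS s s' → CongS (.cons α p s) (.cons α p' s')
end

/-- `SMem α p s`: the summand `α.p` occurs in the guarded sum `s`. -/
inductive SMem : Act → Proc → Sm → Prop
  | head {α : Act} {p : Proc} {s : Sm} : SMem α p (.cons α p s)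
  | tail {α β : Act} {p q : Proc} {s : Sm} : SMem α p s → SMem α p (.cons β q s)

/-- The labelled transition system of CCS: rules (pre), (res), (par), (syn), (str). -/
inductive Step : Proc → Act → Proc → Prop
  | pre {α : Act} {p : Proc} {s : Sm} : SMem α p s → Step (.sum s) α p
  | res {a : ℕ} {α : Act} {p p' : Proc} :
      a ∉ fnAct α → Step p α p' → Step (.res a p) α (.res a p')
  | par {α : Act} {p p' q : Proc} :
      Step p α p' → Step (.par p q) α (.par p' q)
  | syn {c : ℕ} {p p' q q' : Proc} :
      Step p (.out c) p' → Step q (.inp c) q' →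
      Step (.par p q) .tau (.par p' q')
  | str {α : Act} {p q p' q' : Proc} :
      CongP p q → CongP p' q' → Step p α p' → Step q α q'

mutual
/-- Unary reductions `P → R` of the CCS dialgebra:
rules (tau), (res), (par₁), (int), (str₁). -/
inductive URed : Proc → Proc → Prop
  | tau {p : Proc} {s : Sm} : SMem .tau p s → URed (.sum s) p
  | res {a : ℕ} {p p' : Proc} : URed p p' → URed (.res a p) (.res a p')
  | par1 {p p' q : Proc} : URed p p' → URed (.par p q) (.par p' q)
  | int {p q r : Proc} : BRed p q r → URed (.par p q) r
  | str1 {p q r s : Proc} : URed p r → CongP p q → CongP r s → URed q s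
/-- Binary interactions `(P,Q) → R` of the CCS dialgebra:
rules (hid), (par₂), (syn), (sym), (str₂). -/
inductive BRed : Proc → Proc → Proc → Prop
  | hid {a : ℕ} {p q r : Proc} :
      BRed p q r → ¬ FreeP a q → BRed (.res a p) q (.res a r)
  | par2 {p q r s : Proc} : BRed p q r → BRed (.par p s) q (.par s r)
  | syn {a : ℕ} {p q : Proc} {s t : Sm} :
      SMem (.out a) p s → SMem (.inp a) q t →
      BRed (.sum s) (.sum t) (.par p q)
  | sym {p q r : Proc} : BRed p q r → BRed q p r
  | str2 {p q r p' q' r' : Proc} :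
      BRed p q r → CongP p p' → CongP q q' → CongP r r' → BRed p' q' r'
end
-- section 1: rename basics
theorem renameAct_comp (f g : ℕ → ℕ) (α : Act) :
    renameAct f (renameAct g α) = renameAct (f ∘ g) α := by cases α <;> rfl

mutual
theorem renameP_comp (f g : ℕ → ℕ) : ∀ p, renameP f (renameP g p) = renameP (f ∘ g) p
  | .sum s => by rw [renameP, renameP, renameP, renameS_comp]
  | .par p q => by rw [renameP, renameP, renameP, renameP_comp f g p, renameP_comp f g q]
  | .res a p => by rw [renameP, renameP, renameP, renameP_comp f g p]; rfl
theorem renameS_comp (f g : ℕ → ℕ) : ∀ s, renameS f (renameS g s) = renameS (f ∘ g) s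
  | .nil => rfl
  | .cons α p s => by
      rw [renameS, renameS, renameS, renameAct_comp, renameP_comp f g p, renameS_comp f g s]
end

theorem renameAct_ext {f g : ℕ → ℕ} (h : ∀ x, f x = g x) (α : Act) :
    renameAct f α = renameAct g α := by cases α <;> simp [renameAct, h]

mutual
theorem renameP_ext {f g : ℕ → ℕ} (h : ∀ x, f x = g x) : ∀ p, renameP f p = renameP g p
  | .sum s => by rw [renameP, renameP, renameS_ext h]
  | .par p q => by rw [renameP, renameP, renameP_ext h p, renameP_ext h q]
  | .res a p => by rw [renameP, renameP, renameP_ext h p, h]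
theorem renameS_ext {f g : ℕ → ℕ} (h : ∀ x, f x = g x) : ∀ s, renameS f s = renameS g s
  | .nil => rfl
  | .cons α p s => by rw [renameS, renameS, renameAct_ext h, renameP_ext h p, renameS_ext h s]
end

mutual
theorem renameP_id : ∀ p, renameP id p = p
  | .sum s => by rw [renameP, renameS_id]
  | .par p q => by rw [renameP, renameP_id p, renameP_id q]
  | .res a p => by rw [renameP, renameP_id p]; rfl
theorem renameS_id : ∀ s, renameS id s = s
  | .nil => rfl
  | .cons α p s => by rw [renameS, renameP_id p, renameS_id s]; cases α <;> rfl
end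
-- section 2: inversion lemmas and Null/Atom
@[simp] theorem freeS_nil (a : ℕ) : ¬ FreeS a Sm.nil := fun h => by cases h

@[simp] theorem freeS_cons {a : ℕ} {α : Act} {p : Proc} {s : Sm} :
    FreeS a (.cons α p s) ↔ a ∈ fnAct α ∨ FreeP a p ∨ FreeS a s := by
  constructor
  · intro h; cases h with
    | act h => exact Or.inl h
    | headP h => exact Or.inr (Or.inl h)
    | tail h => exact Or.inr (Or.inr h)
  · rintro (h | h | h)
    exacts [FreeS.act h, FreeS.headP h, FreeS.tail h]

@[simp] theorem freeP_sum {a : ℕ} {s : Sm} : FreeP a (.sum s) ↔ FreeS a s := by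
  constructor
  · intro h; cases h; assumption
  · exact FreeP.sum

@[simp] theorem freeP_par {a : ℕ} {p q : Proc} :
    FreeP a (.par p q) ↔ FreeP a p ∨ FreeP a q := by
  constructor
  · intro h; cases h with
    | parL h => exact Or.inl h
    | parR h => exact Or.inr h
  · rintro (h | h); exacts [FreeP.parL h, FreeP.parR h]

@[simp] theorem freeP_res {a b : ℕ} {p : Proc} :
    FreeP a (.res b p) ↔ a ≠ b ∧ FreeP a p := by
  constructor
  · intro h; cases h with
    | res h1 h2 => exact ⟨h1, h2⟩
  · rintro ⟨h1, h2⟩; exact FreeP.res h1 h2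

/-- Processes structurally congruent to `0`. -/
inductive Null : Proc → Prop
  | nil : Null (.sum .nil)
  | par {p q : Proc} : Null p → Null q → Null (.par p q)
  | res {a : ℕ} {p : Proc} : Null p → Null (.res a p)

@[simp] theorem null_sum {s : Sm} : Null (.sum s) ↔ s = .nil := by
  constructor
  · intro h; cases h; rfl
  · rintro rfl; exact Null.nil

@[simp] theorem null_par {p q : Proc} : Null (.par p q) ↔ Null p ∧ Null q := by
  constructor
  · intro h; cases h with | par h1 h2 => exact ⟨h1, h2⟩
  · rintro ⟨h1, h2⟩; exact Null.par h1 h2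

@[simp] theorem null_res {a : ℕ} {p : Proc} : Null (.res a p) ↔ Null p := by
  constructor
  · intro h; cases h; assumption
  · exact Null.res

/-- Processes structurally congruent to `δ.0`. -/
inductive Atom (δ : Act) : Proc → Prop
  | base {p : Proc} : Null p → Atom δ (.sum (.cons δ p .nil))
  | parL {p q : Proc} : Atom δ p → Null q → Atom δ (.par p q)
  | parR {p q : Proc} : Null p → Atom δ q → Atom δ (.par p q)
  | res {a : ℕ} {p : Proc} : a ∉ fnAct δ → Atom δ p → Atom δ (.res a p)

@[simp] theorem atom_sum {δ : Act} {s : Sm} :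
    Atom δ (.sum s) ↔ ∃ p, s = .cons δ p .nil ∧ Null p := by
  constructor
  · intro h; cases h with | base h => exact ⟨_, rfl, h⟩
  · rintro ⟨p, rfl, h⟩; exact Atom.base h

@[simp] theorem atom_par {δ : Act} {p q : Proc} :
    Atom δ (.par p q) ↔ (Atom δ p ∧ Null q) ∨ (Null p ∧ Atom δ q) := by
  constructor
  · intro h; cases h with
    | parL h1 h2 => exact Or.inl ⟨h1, h2⟩
    | parR h1 h2 => exact Or.inr ⟨h1, h2⟩
  · rintro (⟨h1, h2⟩ | ⟨h1, h2⟩); exacts [Atom.parL h1 h2, Atom.parR h1 h2]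

@[simp] theorem atom_res {δ : Act} {a : ℕ} {p : Proc} :
    Atom δ (.res a p) ↔ a ∉ fnAct δ ∧ Atom δ p := by
  constructor
  · intro h; cases h with | res h1 h2 => exact ⟨h1, h2⟩
  · rintro ⟨h1, h2⟩; exact Atom.res h1 h2

theorem Null.not_atom {p : Proc} (h : Null p) {δ : Act} : ¬ Atom δ p := by
  induction h with
  | nil => intro h; simp at h
  | par h1 h2 ih1 ih2 => intro h; rcases atom_par.1 h with ⟨h, _⟩ | ⟨_, h⟩
                         exacts [ih1 h, ih2 h]
  | res h ih => intro h'; exact ih (atom_res.1 h').2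

theorem Atom.free {δ : Act} {p : Proc} (h : Atom δ p) {a : ℕ} (ha : a ∈ fnAct δ) :
    FreeP a p := by
  induction h with
  | base _ => exact freeP_sum.2 (FreeS.act ha)
  | parL _ _ ih => exact FreeP.parL ih
  | parR _ _ ih => exact FreeP.parR ih
  | res hn _ ih => exact FreeP.res (fun h => hn (h ▸ ha)) ih
-- section 3: rename lemmas
@[simp] theorem fnAct_tau : fnAct .tau = (∅ : Set ℕ) := rfl
@[simp] theorem mem_fnAct_inp {a b : ℕ} : a ∈ fnAct (.inp b) ↔ a = b := Iff.rfl
@[simp] theorem mem_fnAct_out {a b : ℕ} : a ∈ fnAct (.out b) ↔ a = b := Iff.rfl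

theorem mem_fnAct_rename {f : ℕ ≃ ℕ} {a : ℕ} {α : Act} :
    f a ∈ fnAct (renameAct f α) ↔ a ∈ fnAct α := by
  cases α <;> simp [renameAct, f.injective.eq_iff]

theorem freeP_rename_of {f : ℕ ≃ ℕ} :
    ∀ {a : ℕ} {p : Proc}, FreeP a p → FreeP (f a) (renameP f p) := by
  intro a p h
  induction h using FreeP.rec
    (motive_2 := fun (s : Sm) (_ : FreeS a s) => FreeS (f a) (renameS f s)) with
  | sum h ih => exact freeP_sum.2 ih
  | parL h ih => exact FreeP.parL ih
  | parR h ih => exact FreeP.parR ih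
  | res hne h ih => exact FreeP.res (fun e => hne (f.injective e)) ih
  | act h => exact FreeS.act (mem_fnAct_rename.2 h)
  | headP h ih => exact FreeS.headP ih
  | tail h ih => exact FreeS.tail ih

theorem freeP_rename {f : ℕ ≃ ℕ} {a : ℕ} {p : Proc} :
    FreeP (f a) (renameP f p) ↔ FreeP a p := by
  refine ⟨fun h => ?_, freeP_rename_of⟩
  have := freeP_rename_of (f := f.symm) h
  rwa [renameP_comp, f.symm_apply_apply,
    renameP_ext (f := ⇑f.symm ∘ ⇑f) (g := id) (fun x => f.symm_apply_apply x), renameP_id] at this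

theorem null_rename_of {f : ℕ → ℕ} {p : Proc} (h : Null p) : Null (renameP f p) := by
  induction h with
  | nil => exact Null.nil
  | par _ _ ih1 ih2 => exact Null.par ih1 ih2
  | res _ ih => exact Null.res ih

theorem null_rename {f : ℕ ≃ ℕ} {p : Proc} : Null (renameP f p) ↔ Null p := by
  refine ⟨fun h => ?_, null_rename_of⟩
  have := null_rename_of (f := ⇑f.symm) h
  rwa [renameP_comp, renameP_ext (f := ⇑f.symm ∘ ⇑f) (g := id) (fun x => f.symm_apply_apply x), renameP_id]
    at this

theorem atom_rename_of {f : ℕ ≃ ℕ} {δ : Act} {p : Proc} (h : Atom δ p) :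
    Atom (renameAct f δ) (renameP f p) := by
  induction h with
  | base h => exact Atom.base (null_rename_of h)
  | parL _ h2 ih => exact Atom.parL ih (null_rename_of h2)
  | parR h1 _ ih => exact Atom.parR (null_rename_of h1) ih
  | res hn _ ih =>
      refine Atom.res (fun hm => ?_) ih
      exact hn (mem_fnAct_rename.1 hm)

theorem renameAct_symm_cancel (f : ℕ ≃ ℕ) (α : Act) :
    renameAct f.symm (renameAct f α) = α := by
  cases α <;> simp [renameAct]

theorem atom_rename {f : ℕ ≃ ℕ} {δ : Act} {p : Proc} :
    Atom (renameAct f δ) (renameP f p) ↔ Atom δ p := by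
  refine ⟨fun h => ?_, atom_rename_of⟩
  have := atom_rename_of (f := f.symm) h
  rwa [renameAct_symm_cancel, renameP_comp,
    renameP_ext (f := ⇑f.symm ∘ ⇑f) (g := id) (fun x => f.symm_apply_apply x), renameP_id] at this

theorem SMem.rename {f : ℕ → ℕ} {α : Act} {p : Proc} {s : Sm} (h : SMem α p s) :
    SMem (renameAct f α) (renameP f p) (renameS f s) := by
  induction h with
  | head => exact SMem.head
  | tail _ ih => exact SMem.tail ih

theorem renameP_swap_swap {a b : ℕ} (f : ℕ ≃ ℕ) (p : Proc) :
    renameP f (renameP (Equiv.swap a b) p)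
      = renameP (Equiv.swap (f a) (f b)) (renameP f p) := by
  rw [renameP_comp, renameP_comp]
  refine renameP_ext (fun x => ?_) p
  simp only [Function.comp_apply]
  by_cases hxa : x = a
  · subst hxa; simp
  · by_cases hxb : x = b
    · subst hxb; simp
    · rw [Equiv.swap_apply_of_ne_of_ne hxa hxb,
        Equiv.swap_apply_of_ne_of_ne (fun h => hxa (f.injective h))
          (fun h => hxb (f.injective h))]
-- section 4: rename preserves congruence and steps
@[simp] theorem renameP_zero (f : ℕ → ℕ) : renameP f Proc.zero = Proc.zero := rfl

theorem CongP.rename {f : ℕ ≃ ℕ} {p q : Proc} (h : CongP p q) :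
    CongP (renameP f p) (renameP f q) := by
  induction h using CongP.rec
    (motive_2 := fun (s t : Sm) (_ : CongS s t) => CongS (renameS f s) (renameS f t))
  case refl => exact CongP.refl _
  case symm _ _ _ ih => exact CongP.symm ih
  case trans ih1 ih2 => exact CongP.trans ih1 ih2
  case par_congr ih1 ih2 => exact CongP.par_congr ih1 ih2
  case res_congr ih => exact CongP.res_congr ih
  case sum_congr ih => exact CongP.sum_congr ih
  case alpha a b p hb =>
    rw [renameP, renameP, renameP_swap_swap]
    exact CongP.alpha (fun h => hb (freeP_rename.1 h))
  case par_comm => exact CongP.par_comm _ _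
  case par_assoc => exact CongP.par_assoc _ _ _
  case par_zero => exact CongP.par_zero _
  case res_par hq => exact CongP.res_par (fun h => hq (freeP_rename.1 h))
  case res_zero => exact CongP.res_zero _
  case res_res => exact CongP.res_res _ _ _
  case refl => exact CongS.refl _
  case symm ih => exact CongS.symm ih
  case trans ih1 ih2 => exact CongS.trans ih1 ih2
  case cons_congr ih1 ih2 => exact CongS.cons_congr ih1 ih2

theorem Step.rename {f : ℕ ≃ ℕ} {p p' : Proc} {α : Act} (h : Step p α p') :
    Step (renameP f p) (renameAct f α) (renameP f p') := by
  induction h with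
  | pre h => exact Step.pre h.rename
  | res hn _ ih => exact Step.res (fun h => hn (mem_fnAct_rename.1 h)) ih
  | par _ ih => exact Step.par ih
  | syn _ _ ih1 ih2 => exact Step.syn ih1 ih2
  | str h1 h2 _ ih => exact Step.str h1.rename h2.rename ih
-- section 5: structural congruence preserves Free, Null, Atom
theorem freeP_swap {a b c : ℕ} {p : Proc} :
    FreeP c (renameP (Equiv.swap a b) p) ↔ FreeP (Equiv.swap a b c) p := by
  have h := freeP_rename (f := Equiv.swap a b) (a := Equiv.swap a b c) (p := p)
  rwa [Equiv.swap_apply_self] at h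

theorem atom_swap {a b : ℕ} {δ : Act} {p : Proc} :
    Atom δ (renameP (Equiv.swap a b) p) ↔ Atom (renameAct (Equiv.swap a b) δ) p := by
  have h := atom_rename (f := Equiv.swap a b) (δ := renameAct (Equiv.swap a b) δ) (p := p)
  rw [renameAct_comp,
    renameAct_ext (f := ⇑(Equiv.swap a b) ∘ ⇑(Equiv.swap a b)) (g := id)
      (fun x => Equiv.swap_apply_self _ _ x),
    show renameAct id δ = δ by cases δ <;> rfl] at h
  exact h

/-- Pointwise relation on sums induced by structural congruence. -/
inductive SmR : Sm → Sm → Prop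
  | nil : SmR .nil .nil
  | cons {α : Act} {p p' : Proc} {s s' : Sm} :
      (∀ a, FreeP a p ↔ FreeP a p') → (Null p ↔ Null p') → SmR s s' →
      SmR (.cons α p s) (.cons α p' s')

theorem SmR.refl : ∀ s, SmR s s
  | .nil => SmR.nil
  | .cons α p s => SmR.cons (fun _ => Iff.rfl) Iff.rfl (SmR.refl s)

theorem SmR.symm {s t : Sm} (h : SmR s t) : SmR t s := by
  induction h with
  | nil => exact SmR.nil
  | cons h1 h2 _ ih => exact SmR.cons (fun a => (h1 a).symm) h2.symm ih

theorem SmR.trans {s t v : Sm} (h : SmR s t) (h' : SmR t v) : SmR s v := by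
  induction h generalizing v with
  | nil => exact h'
  | cons h1 h2 _ ih =>
      cases h' with
      | cons h1' h2' h3' => exact SmR.cons (fun a => (h1 a).trans (h1' a)) (h2.trans h2') (ih h3')

theorem SmR.freeS {s t : Sm} (h : SmR s t) (a : ℕ) : FreeS a s ↔ FreeS a t := by
  induction h with
  | nil => exact Iff.rfl
  | cons h1 _ _ ih => simp [h1 a, ih]

theorem cong_inv {p q : Proc} (h : CongP p q) :
    (∀ a, FreeP a p ↔ FreeP a q) ∧ (Null p ↔ Null q) ∧ (∀ δ, Atom δ p ↔ Atom δ q) := by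
  induction h using CongP.rec (motive_2 := fun (s t : Sm) (_ : CongS s t) => SmR s t)
  case refl => exact ⟨fun _ => Iff.rfl, Iff.rfl, fun _ => Iff.rfl⟩
  case symm _ _ _ ih =>
      exact ⟨fun a => (ih.1 a).symm, ih.2.1.symm, fun δ => (ih.2.2 δ).symm⟩
  case trans ih1 ih2 =>
      exact ⟨fun a => (ih1.1 a).trans (ih2.1 a), ih1.2.1.trans ih2.2.1,
        fun δ => (ih1.2.2 δ).trans (ih2.2.2 δ)⟩
  case par_congr ih1 ih2 =>
      refine ⟨fun a => ?_, ?_, fun δ => ?_⟩ <;>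
        simp [ih1.1, ih2.1, ih1.2.1, ih2.2.1, ih1.2.2, ih2.2.2]
  case res_congr ih =>
      refine ⟨fun a => ?_, ?_, fun δ => ?_⟩ <;> simp [ih.1, ih.2.1, ih.2.2]
  case sum_congr ih =>
      refine ⟨fun a => ?_, ?_, fun δ => ?_⟩
      · simpa using ih.freeS a
      · simp only [null_sum]
        cases ih <;> simp
      · simp only [atom_sum]
        cases ih with
        | nil => simp
        | cons h1 h2 h3 =>
            cases h3 with
            | nil => constructor
                     · rintro ⟨pp, he, hn⟩
                       cases he
                       exact ⟨_, rfl, h2.1 hn⟩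
                     · rintro ⟨pp, he, hn⟩
                       cases he
                       exact ⟨_, rfl, h2.2 hn⟩
            | cons _ _ _ => constructor <;> (rintro ⟨pp, he, hn⟩; cases he)
  case alpha a b p hb =>
      refine ⟨fun c => ?_, ?_, fun δ => ?_⟩
      · simp only [freeP_res, freeP_swap]
        rcases eq_or_ne c a with rfl | hca
        · simp [Equiv.swap_apply_left, hb]
        · rcases eq_or_ne c b with rfl | hcb
          · simp [Equiv.swap_apply_right, hb]
          · simp [Equiv.swap_apply_of_ne_of_ne hca hcb, hca, hcb]
      · simp [null_rename]
      · simp only [atom_res, atom_swap]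
        cases δ with
        | tau => simp [renameAct]
        | inp c =>
            simp only [renameAct, mem_fnAct_inp]
            have hAb : ¬ Atom (.inp b) p := fun h => hb (h.free (by simp))
            rcases eq_or_ne c a with rfl | hca
            · simp [Equiv.swap_apply_left, hAb]
            · rcases eq_or_ne c b with rfl | hcb
              · simp [Equiv.swap_apply_right, hAb]
              · simp [Equiv.swap_apply_of_ne_of_ne hca hcb, hca.symm, hcb.symm]
        | out c =>
            simp only [renameAct, mem_fnAct_out]
            have hAb : ¬ Atom (.out b) p := fun h => hb (h.free (by simp))
            rcases eq_or_ne c a with rfl | hca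
            · simp [Equiv.swap_apply_left, hAb]
            · rcases eq_or_ne c b with rfl | hcb
              · simp [Equiv.swap_apply_right, hAb]
              · simp [Equiv.swap_apply_of_ne_of_ne hca hcb, hca.symm, hcb.symm]
  case par_comm =>
      refine ⟨fun a => ?_, ?_, fun δ => ?_⟩ <;> simp [or_comm, and_comm] <;> tauto
  case par_assoc =>
      refine ⟨fun a => ?_, ?_, fun δ => ?_⟩ <;> simp [or_assoc, and_assoc] <;> tauto
  case par_zero =>
      refine ⟨fun a => ?_, ?_, fun δ => ?_⟩ <;>
        simp [Proc.zero, Null.nil, show ∀ δ, ¬ Atom δ Proc.zero from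
          fun δ h => by simp [Proc.zero] at h]
  case res_par a p q hq =>
      refine ⟨fun c => ?_, ?_, fun δ => ?_⟩
      · simp only [freeP_res, freeP_par]
        constructor
        · rintro ⟨h1, h2 | h2⟩
          exacts [Or.inl ⟨h1, h2⟩, Or.inr h2]
        · rintro (⟨h1, h2⟩ | h2)
          · exact ⟨h1, Or.inl h2⟩
          · exact ⟨fun e => hq (e ▸ h2), Or.inr h2⟩
      · simp
      · simp only [atom_res, atom_par, null_res]
        constructor
        · rintro ⟨h1, ⟨h2, h3⟩ | ⟨h2, h3⟩⟩
          exacts [Or.inl ⟨⟨h1, h2⟩, h3⟩, Or.inr ⟨h2, h3⟩]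
        · rintro (⟨⟨h1, h2⟩, h3⟩ | ⟨h2, h3⟩)
          · exact ⟨h1, Or.inl ⟨h2, h3⟩⟩
          · refine ⟨fun hm => hq (h3.free hm), Or.inr ⟨h2, h3⟩⟩
  case res_zero =>
      refine ⟨fun a => ?_, ?_, fun δ => ?_⟩ <;>
        simp [Proc.zero, Null.nil]
  case res_res =>
      refine ⟨fun c => ?_, ?_, fun δ => ?_⟩ <;> simp <;> tauto
  case refl => exact SmR.refl _
  case symm ih => exact ih.symm
  case trans ih1 ih2 => exact ih1.trans ih2
  case cons_congr ih1 ih2 => exact SmR.cons ih1.1 ih1.2.1 ih2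
-- section 6: basic facts about steps
theorem SMem.freeS {α : Act} {p : Proc} {s : Sm} (h : SMem α p s) :
    (∀ a, a ∈ fnAct α → FreeS a s) ∧ (∀ a, FreeP a p → FreeS a s) := by
  induction h with
  | head => exact ⟨fun a ha => FreeS.act ha, fun a ha => FreeS.headP ha⟩
  | tail _ ih => exact ⟨fun a ha => FreeS.tail (ih.1 a ha), fun a ha => FreeS.tail (ih.2 a ha)⟩

/-- names in the label of a transition are free in the source. -/
theorem Step.free_label {p p' : Proc} {α : Act} (h : Step p α p') :
    ∀ a, a ∈ fnAct α → FreeP a p := by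
  induction h with
  | pre h => exact fun a ha => freeP_sum.2 (h.freeS.1 a ha)
  | res hn _ ih => exact fun a ha => FreeP.res (fun e => hn (e ▸ ha)) (ih a ha)
  | par _ ih => exact fun a ha => FreeP.parL (ih a ha)
  | syn _ _ _ _ => exact fun a ha => by simp at ha
  | str h1 _ _ ih => exact fun a ha => ((cong_inv h1).1 a).1 (ih a ha)

/-- transitions do not create free names. -/
theorem Step.free_target {p p' : Proc} {α : Act} (h : Step p α p') :
    ∀ a, FreeP a p' → FreeP a p := by
  induction h with
  | pre h => exact fun a ha => freeP_sum.2 (h.freeS.2 a ha)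
  | res hn _ ih =>
      intro a ha
      rcases freeP_res.1 ha with ⟨h1, h2⟩
      exact FreeP.res h1 (ih a h2)
  | par _ ih =>
      intro a ha
      rcases freeP_par.1 ha with h1 | h1
      exacts [FreeP.parL (ih a h1), FreeP.parR h1]
  | syn _ _ ih1 ih2 =>
      intro a ha
      rcases freeP_par.1 ha with h1 | h1
      exacts [FreeP.parL (ih1 a h1), FreeP.parR (ih2 a h1)]
  | str h1 h2 _ ih =>
      intro a ha
      exact ((cong_inv h1).1 a).1 (ih a (((cong_inv h2).1 a).2 ha))

theorem Null.no_step {p p' : Proc} {α : Act} (h : Step p α p') (hn : Null p) : False := by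
  induction h with
  | pre h => rw [null_sum] at hn; subst hn; cases h
  | res _ _ ih => exact ih (null_res.1 hn)
  | par _ ih => exact ih (null_par.1 hn).1
  | syn _ _ ih1 _ => exact ih1 (null_par.1 hn).1
  | str h1 _ _ ih => exact ih ((cong_inv h1).2.1.2 hn)

theorem Atom.step {p p' : Proc} {α : Act} (h : Step p α p') {δ : Act} (ha : Atom δ p) :
    α = δ ∧ Null p' := by
  induction h with
  | pre h =>
      rcases atom_sum.1 ha with ⟨q, rfl, hq⟩
      cases h with
      | head => exact ⟨rfl, hq⟩
      | tail h => cases h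
  | res hn _ ih =>
      rcases atom_res.1 ha with ⟨h1, h2⟩
      rcases ih h2 with ⟨rfl, h3⟩
      exact ⟨rfl, Null.res h3⟩
  | @par α p p' q hs ih =>
      rcases atom_par.1 ha with ⟨h1, h2⟩ | ⟨h1, h2⟩
      · rcases ih h1 with ⟨rfl, h3⟩
        exact ⟨rfl, Null.par h3 h2⟩
      · exact absurd h1 (fun h1 => Null.no_step hs h1)
  | syn hs _ _ _ =>
      rcases atom_par.1 ha with ⟨h1, h2⟩ | ⟨h1, h2⟩
      · exact absurd h2 (fun h2 => Null.no_step (by assumption) h2)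
      · exact absurd h1 (fun h1 => Null.no_step hs h1)
  | str h1 h2 _ ih =>
      rcases ih (((cong_inv h1).2.2 δ).2 ha) with ⟨rfl, h3⟩
      exact ⟨rfl, (cong_inv h2).2.1.1 h3⟩
-- section 7: finite free-name support and freshness
def fnA : Act → Finset ℕ
  | .tau => ∅
  | .inp a => {a}
  | .out a => {a}

mutual
def fnP : Proc → Finset ℕ
  | .sum s => fnS s
  | .par p q => fnP p ∪ fnP q
  | .res a p => (fnP p).erase a
def fnS : Sm → Finset ℕ
  | .nil => ∅
  | .cons α p s => fnA α ∪ fnP p ∪ fnS s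
end

theorem mem_fnA {a : ℕ} {α : Act} : a ∈ fnA α ↔ a ∈ fnAct α := by
  cases α <;> simp [fnA, fnAct]

mutual
theorem mem_fnP : ∀ {p : Proc} {a : ℕ}, a ∈ fnP p ↔ FreeP a p
  | .sum s, a => by rw [fnP]; simp [mem_fnS]
  | .par p q, a => by rw [fnP]; simp [Finset.mem_union, mem_fnP (p := p), mem_fnP (p := q)]
  | .res b p, a => by rw [fnP]; simp [Finset.mem_erase, mem_fnP (p := p)]
theorem mem_fnS : ∀ {s : Sm} {a : ℕ}, a ∈ fnS s ↔ FreeS a s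
  | .nil, a => by rw [fnS]; simp
  | .cons α p s, a => by
      rw [fnS]; simp [Finset.mem_union, mem_fnA, mem_fnP (p := p), mem_fnS (s := s)]
end

theorem exists_fresh (s : Finset ℕ) : ∃ c, c ∉ s := Finset.exists_notMem s

-- congruence helpers
theorem Null.congP {p : Proc} (h : Null p) : CongP p Proc.zero := by
  induction h with
  | nil => exact CongP.refl _
  | par _ _ ih1 ih2 =>
      exact CongP.trans (CongP.par_congr ih1 ih2) (CongP.par_zero _)
  | res _ ih =>
      exact CongP.trans (CongP.res_congr ih) (CongP.res_zero _)

theorem cong_zero_par (p : Proc) : CongP (.par Proc.zero p) p :=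
  CongP.trans (CongP.par_comm _ _) (CongP.par_zero _)

/-- `s ∥ (x ∥ y) ≡ (x ∥ s) ∥ y`. -/
theorem cong_shuffle (s x y : Proc) :
    CongP (.par s (.par x y)) (.par (.par x s) y) :=
  CongP.trans (CongP.par_comm _ _)
    (CongP.trans (CongP.par_assoc x y s)
      (CongP.trans (CongP.par_congr (CongP.refl x) (CongP.par_comm y s))
        (CongP.symm (CongP.par_assoc x s y))))

/-- `(νa)(x ∥ y) ≡ x ∥ (νa)y` when `a` is not free in `x`. -/
theorem cong_res_par_right {a : ℕ} {x y : Proc} (hx : ¬ FreeP a x) :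
    CongP (.res a (.par x y)) (.par x (.res a y)) :=
  CongP.trans (CongP.res_congr (CongP.par_comm _ _))
    (CongP.trans (CongP.res_par hx) (CongP.par_comm _ _))
-- section 8: the key synchronisation lemma
theorem renameP_refl (p : Proc) : renameP ⇑(Equiv.refl ℕ) p = p :=
  (renameP_ext (f := ⇑(Equiv.refl ℕ)) (g := id) (fun _ => rfl) p).trans (renameP_id p)

theorem cong_shuffle2 (s x w : Proc) :
    CongP (.par s (.par x w)) (.par x (.par w s)) :=
  CongP.trans (cong_shuffle s x w)
    (CongP.trans (CongP.par_assoc x s w)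
      (CongP.par_congr (CongP.refl x) (CongP.par_comm s w)))

theorem renameP_trans_swap (f : ℕ ≃ ℕ) (c d : ℕ) (p : Proc) :
    renameP ⇑(f.trans (Equiv.swap c d)) p
      = renameP ⇑(Equiv.swap c d) (renameP ⇑f p) := by
  rw [renameP_comp]
  exact renameP_ext (fun x => rfl) p

theorem Lout {x : Proc} {γ : Act} {x' : Proc} (h : Step x γ x') :
    ∀ (f : ℕ ≃ ℕ) (a : ℕ) (q : Proc) (t : Sm), renameAct ⇑f γ = .out a →
      SMem (.inp a) q t → BRed (renameP ⇑f x) (.sum t) (.par (renameP ⇑f x') q) := by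
  induction h with
  | @pre γ p s hm =>
      intro f a q t hγ hq
      rcases γ with _ | b₀ | a₀ <;> simp only [renameAct] at hγ
      · exact absurd hγ (by simp)
      · exact absurd hγ (by simp)
      injection hγ with h; subst h
      exact BRed.syn (hm.rename (f := ⇑f)) hq
  | @res c γ x0 x0' hn hs ih =>
      intro f a q t hγ hq
      rcases γ with _ | b₀ | a₀ <;> simp only [renameAct] at hγ
      · exact absurd hγ (by simp)
      · exact absurd hγ (by simp)
      injection hγ with h; subst h
      have hca : c ≠ a₀ := fun e => hn (by simp [e])
      obtain ⟨d, hd⟩ := exists_fresh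
        (fnP (renameP ⇑f x0) ∪ fnS t ∪ fnP q ∪ {f a₀})
      simp only [Finset.mem_union, Finset.mem_singleton, not_or] at hd
      obtain ⟨⟨⟨hd0, hdt⟩, hdq⟩, hda⟩ := hd
      set g := f.trans (Equiv.swap (f c) d) with hg
      have hga : renameAct ⇑g (Act.out a₀) = .out (f a₀) := by
        simp only [renameAct, Act.out.injEq, hg, Equiv.coe_trans, Function.comp_apply]
        exact Equiv.swap_apply_of_ne_of_ne
          (fun e => hca (f.injective e).symm) (fun e => hda e.symm)
      have hIH := ih g (f a₀) q t hga hq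
      have hhid := BRed.hid (a := d) hIH (fun h => hdt (mem_fnS.2 (freeP_sum.1 h)))
      have hd0' : ¬ FreeP d (renameP ⇑f x0) := fun h => hd0 (mem_fnP.2 h)
      have hd1' : ¬ FreeP d (renameP ⇑f x0') := by
        intro h
        have h2 : FreeP (f.symm d) x0' := by
          have h5 := freeP_rename (f := f) (a := f.symm d) (p := x0')
          rw [f.apply_symm_apply] at h5
          exact h5.1 h
        refine hd0' ?_
        have h5 := freeP_rename (f := f) (a := f.symm d) (p := x0)
        rw [f.apply_symm_apply] at h5
        exact h5.2 (hs.free_target _ h2)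
      have cong1 : CongP (.res (f c) (renameP ⇑f x0)) (.res d (renameP ⇑g x0)) := by
        rw [hg, renameP_trans_swap]
        exact CongP.alpha hd0'
      have cong2 : CongP (.res d (.par (renameP ⇑g x0') q))
          (.par (.res (f c) (renameP ⇑f x0')) q) := by
        refine CongP.trans (CongP.res_par (fun h => hdq (mem_fnP.2 h))) ?_
        refine CongP.par_congr (CongP.symm ?_) (CongP.refl q)
        rw [hg, renameP_trans_swap]
        exact CongP.alpha hd1'
      have := BRed.str2 hhid (CongP.symm cong1) (CongP.refl _) cong2
      simpa [renameP] using this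
  | @par γ x0 x0' s₀ hs ih =>
      intro f a q t hγ hq
      have := BRed.par2 (s := renameP ⇑f s₀) (ih f a q t hγ hq)
      have := BRed.str2 this (CongP.refl _) (CongP.refl _)
        (cong_shuffle (renameP ⇑f s₀) (renameP ⇑f x0') q)
      simpa [renameP] using this
  | syn hs1 hs2 ih1 ih2 =>
      intro f a q t hγ hq
      exact absurd hγ (by simp [renameAct])
  | str h1 h2 hs ih =>
      intro f a q t hγ hq
      exact BRed.str2 (ih f a q t hγ hq) (CongP.rename h1) (CongP.refl _)
        (CongP.par_congr (CongP.rename h2) (CongP.refl q))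

theorem Lin {y : Proc} {β : Act} {y' : Proc} (h : Step y β y') :
    ∀ (f : ℕ ≃ ℕ) (b : ℕ) (x x' : Proc), renameAct ⇑f β = .inp b →
      Step x (.out b) x' → BRed x (renameP ⇑f y) (.par x' (renameP ⇑f y')) := by
  induction h with
  | @pre β p₀ s hm =>
      intro f b x x' hβ hx
      rcases β with _ | b₀ | a₀ <;> simp only [renameAct] at hβ
      case tau => exact absurd hβ (by simp)
      case out => exact absurd hβ (by simp)
      injection hβ with h; subst h
      have := Lout hx (Equiv.refl ℕ) (f b₀) (renameP ⇑f p₀) (renameS ⇑f s)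
        (by simp [renameAct]) (by simpa [renameAct] using hm.rename (f := ⇑f))
      simpa [renameP_refl, renameP, Equiv.coe_refl, renameP_id] using this
  | @res c β y0 y0' hn hs ih =>
      intro f b x x' hβ hx
      rcases β with _ | b₀ | a₀ <;> simp only [renameAct] at hβ
      case tau => exact absurd hβ (by simp)
      case out => exact absurd hβ (by simp)
      injection hβ with h; subst h
      have hcb : c ≠ b₀ := fun e => hn (by simp [e])
      obtain ⟨d, hd⟩ := exists_fresh
        (fnP (renameP ⇑f y0) ∪ fnP x ∪ {f b₀})
      simp only [Finset.mem_union, Finset.mem_singleton, not_or] at hd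
      obtain ⟨⟨hd0, hdx⟩, hdb⟩ := hd
      set g := f.trans (Equiv.swap (f c) d) with hg
      have hgb : renameAct ⇑g (Act.inp b₀) = .inp (f b₀) := by
        simp only [renameAct, Act.inp.injEq, hg, Equiv.coe_trans, Function.comp_apply]
        exact Equiv.swap_apply_of_ne_of_ne
          (fun e => hcb (f.injective e).symm) (fun e => hdb e.symm)
      have hIH := ih g (f b₀) x x' hgb hx
      have hdx' : ¬ FreeP d x := fun h => hdx (mem_fnP.2 h)
      have hhid := BRed.sym (BRed.hid (a := d) (BRed.sym hIH) hdx')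
      have hd0' : ¬ FreeP d (renameP ⇑f y0) := fun h => hd0 (mem_fnP.2 h)
      have hd1' : ¬ FreeP d (renameP ⇑f y0') := by
        intro h
        have h2 : FreeP (f.symm d) y0' := by
          have h5 := freeP_rename (f := f) (a := f.symm d) (p := y0')
          rw [f.apply_symm_apply] at h5
          exact h5.1 h
        refine hd0' ?_
        have h5 := freeP_rename (f := f) (a := f.symm d) (p := y0)
        rw [f.apply_symm_apply] at h5
        exact h5.2 (hs.free_target _ h2)
      have hdx2 : ¬ FreeP d x' := fun h => hdx' (hx.free_target _ h)
      have cong1 : CongP (.res (f c) (renameP ⇑f y0)) (.res d (renameP ⇑g y0)) := by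
        rw [hg, renameP_trans_swap]
        exact CongP.alpha hd0'
      have cong2 : CongP (.res d (.par x' (renameP ⇑g y0')))
          (.par x' (.res (f c) (renameP ⇑f y0'))) := by
        refine CongP.trans (cong_res_par_right hdx2) ?_
        refine CongP.par_congr (CongP.refl x') (CongP.symm ?_)
        rw [hg, renameP_trans_swap]
        exact CongP.alpha hd1'
      have := BRed.str2 hhid (CongP.refl x) (CongP.symm cong1) cong2
      simpa [renameP] using this
  | @par β y0 y0' s₀ hs ih =>
      intro f b x x' hβ hx
      have := BRed.sym (BRed.par2 (s := renameP ⇑f s₀) (BRed.sym (ih f b x x' hβ hx)))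
      have := BRed.str2 this (CongP.refl _) (CongP.refl _)
        (cong_shuffle2 (renameP ⇑f s₀) x' (renameP ⇑f y0'))
      simpa [renameP] using this
  | syn hs1 hs2 ih1 ih2 =>
      intro f b x x' hβ hx
      exact absurd hβ (by simp [renameAct])
  | str h1 h2 hs ih =>
      intro f b x x' hβ hx
      exact BRed.str2 (ih f b x x' hβ hx) (CongP.refl x) (CongP.rename h1)
        (CongP.par_congr (CongP.refl x') (CongP.rename h2))

/-- complementary transitions synchronise in the dialgebra. -/
theorem bred_of_steps {b : ℕ} {x x' y y' : Proc}
    (hx : Step x (.out b) x') (hy : Step y (.inp b) y') :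
    BRed x y (.par x' y') := by
  have := Lin hy (Equiv.refl ℕ) b x x' (by simp [renameAct]) hx
  simpa [renameP_refl, Equiv.coe_refl, renameP_id] using this
-- section 9: soundness of the dialgebra w.r.t. the LTS
/-- the conclusion of part (iv). -/
def SP (x y z : Proc) : Prop :=
  ∃ (b : ℕ) (x' y' : Proc), CongP z (.par x' y') ∧
    ((Step x (.inp b) x' ∧ Step y (.out b) y') ∨
     (Step x (.out b) x' ∧ Step y (.inp b) y'))

theorem ured_bred_sound :
    (∀ {x y : Proc}, URed x y → Step x .tau y) ∧
    (∀ {x y z : Proc}, BRed x y z → SP x y z) := by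
  have key : ∀ {x y : Proc}, URed x y → Step x .tau y := by
    intro x y h
    induction h using URed.rec (motive_2 := fun (x y z : Proc) (_ : BRed x y z) => SP x y z)
    case tau h => exact Step.pre h
    case res ih => exact Step.res (by simp) ih
    case par1 ih => exact Step.par ih
    case int p q r _ ih =>
        obtain ⟨b, x', y', hc, ⟨hx, hy⟩ | ⟨hx, hy⟩⟩ := ih
        · exact Step.str (CongP.par_comm q p)
            (CongP.trans (CongP.par_comm y' x') (CongP.symm hc)) (Step.syn hy hx)
        · exact Step.str (CongP.refl _) (CongP.symm hc) (Step.syn hx hy)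
    case str1 h1 h2 ih => exact Step.str h1 h2 ih
    case hid a p q r _ hfq ih =>
        obtain ⟨b, x', y', hc, hd⟩ := ih
        have hyb : FreeP b q := by
          rcases hd with ⟨-, hy⟩ | ⟨-, hy⟩ <;> exact hy.free_label b (by simp)
        have hab : a ≠ b := fun e => hfq (e ▸ hyb)
        have hay' : ¬ FreeP a y' := by
          rcases hd with ⟨-, hy⟩ | ⟨-, hy⟩ <;> exact fun h => hfq (hy.free_target a h)
        refine ⟨b, .res a x', y', ?_, ?_⟩
        · exact CongP.trans (CongP.res_congr hc) (CongP.res_par hay')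
        · rcases hd with ⟨hx, hy⟩ | ⟨hx, hy⟩
          · exact Or.inl ⟨Step.res (by simpa using hab) hx, hy⟩
          · exact Or.inr ⟨Step.res (by simpa using hab) hx, hy⟩
    case par2 p q r s _ ih =>
        obtain ⟨b, x', y', hc, hd⟩ := ih
        refine ⟨b, .par x' s, y', ?_, ?_⟩
        · exact CongP.trans (CongP.par_congr (CongP.refl s) hc) (cong_shuffle s x' y')
        · rcases hd with ⟨hx, hy⟩ | ⟨hx, hy⟩
          · exact Or.inl ⟨Step.par hx, hy⟩
          · exact Or.inr ⟨Step.par hx, hy⟩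
    case syn a p q s t h1 h2 =>
        exact ⟨a, p, q, CongP.refl _, Or.inr ⟨Step.pre h1, Step.pre h2⟩⟩
    case sym ih =>
        obtain ⟨b, x', y', hc, hd⟩ := ih
        refine ⟨b, y', x', CongP.trans hc (CongP.par_comm _ _), ?_⟩
        rcases hd with ⟨hx, hy⟩ | ⟨hx, hy⟩
        · exact Or.inr ⟨hy, hx⟩
        · exact Or.inl ⟨hy, hx⟩
    case str2 _ hp hq hr ih =>
        obtain ⟨b, x', y', hc, hd⟩ := ih
        refine ⟨b, x', y', CongP.trans (CongP.symm hr) hc, ?_⟩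
        rcases hd with ⟨hx, hy⟩ | ⟨hx, hy⟩
        · exact Or.inl ⟨Step.str hp (CongP.refl _) hx, Step.str hq (CongP.refl _) hy⟩
        · exact Or.inr ⟨Step.str hp (CongP.refl _) hx, Step.str hq (CongP.refl _) hy⟩
  have key2 : ∀ {x y z : Proc}, BRed x y z → SP x y z := by
    intro x y z h
    induction h using BRed.rec (motive_1 := fun (x y : Proc) (_ : URed x y) => Step x .tau y)
    case tau h => exact Step.pre h
    case res ih => exact Step.res (by simp) ih
    case par1 ih => exact Step.par ih
    case int p q r _ ih =>
        obtain ⟨b, x', y', hc, ⟨hx, hy⟩ | ⟨hx, hy⟩⟩ := ih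
        · exact Step.str (CongP.par_comm q p)
            (CongP.trans (CongP.par_comm y' x') (CongP.symm hc)) (Step.syn hy hx)
        · exact Step.str (CongP.refl _) (CongP.symm hc) (Step.syn hx hy)
    case str1 h1 h2 ih => exact Step.str h1 h2 ih
    case hid a p q r _ hfq ih =>
        obtain ⟨b, x', y', hc, hd⟩ := ih
        have hyb : FreeP b q := by
          rcases hd with ⟨-, hy⟩ | ⟨-, hy⟩ <;> exact hy.free_label b (by simp)
        have hab : a ≠ b := fun e => hfq (e ▸ hyb)
        have hay' : ¬ FreeP a y' := by
          rcases hd with ⟨-, hy⟩ | ⟨-, hy⟩ <;> exact fun h => hfq (hy.free_target a h)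
        refine ⟨b, .res a x', y', ?_, ?_⟩
        · exact CongP.trans (CongP.res_congr hc) (CongP.res_par hay')
        · rcases hd with ⟨hx, hy⟩ | ⟨hx, hy⟩
          · exact Or.inl ⟨Step.res (by simpa using hab) hx, hy⟩
          · exact Or.inr ⟨Step.res (by simpa using hab) hx, hy⟩
    case par2 p q r s _ ih =>
        obtain ⟨b, x', y', hc, hd⟩ := ih
        refine ⟨b, .par x' s, y', ?_, ?_⟩
        · exact CongP.trans (CongP.par_congr (CongP.refl s) hc) (cong_shuffle s x' y')
        · rcases hd with ⟨hx, hy⟩ | ⟨hx, hy⟩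
          · exact Or.inl ⟨Step.par hx, hy⟩
          · exact Or.inr ⟨Step.par hx, hy⟩
    case syn a p q s t h1 h2 =>
        exact ⟨a, p, q, CongP.refl _, Or.inr ⟨Step.pre h1, Step.pre h2⟩⟩
    case sym ih =>
        obtain ⟨b, x', y', hc, hd⟩ := ih
        refine ⟨b, y', x', CongP.trans hc (CongP.par_comm _ _), ?_⟩
        rcases hd with ⟨hx, hy⟩ | ⟨hx, hy⟩
        · exact Or.inr ⟨hy, hx⟩
        · exact Or.inl ⟨hy, hx⟩
    case str2 _ hp hq hr ih =>
        obtain ⟨b, x', y', hc, hd⟩ := ih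
        refine ⟨b, x', y', CongP.trans (CongP.symm hr) hc, ?_⟩
        rcases hd with ⟨hx, hy⟩ | ⟨hx, hy⟩
        · exact Or.inl ⟨Step.str hp (CongP.refl _) hx, Step.str hq (CongP.refl _) hy⟩
        · exact Or.inr ⟨Step.str hp (CongP.refl _) hx, Step.str hq (CongP.refl _) hy⟩
  exact ⟨key, key2⟩
-- section 10: remaining directions and the main theorem
theorem step_tau_ured : ∀ {x α y}, Step x α y → α = .tau → URed x y := by
  intro x α y h
  induction h with
  | pre h => rintro rfl; exact URed.tau h
  | res hn _ ih => rintro rfl; exact URed.res (ih rfl)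
  | par _ ih => rintro rfl; exact URed.par1 (ih rfl)
  | syn h1 h2 _ _ => intro _; exact URed.int (bred_of_steps h1 h2)
  | str h1 h2 _ ih => rintro rfl; exact URed.str1 (ih rfl) h1 h2

theorem bred_of_sp {x y z : Proc} (h : SP x y z) : BRed x y z := by
  obtain ⟨b, x', y', hc, ⟨hx, hy⟩ | ⟨hx, hy⟩⟩ := h
  · refine BRed.str2 (BRed.sym (bred_of_steps hy hx)) (CongP.refl x) (CongP.refl y)
      (CongP.symm (CongP.trans hc (CongP.par_comm x' y')))
  · exact BRed.str2 (bred_of_steps hx hy) (CongP.refl x) (CongP.refl y) (CongP.symm hc)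

theorem ccs_transition_reaction' :
    (∀ x y : Proc, Step x .tau y ↔ URed x y) ∧
    (∀ (a : ℕ) (x y : Proc),
      Step x (.inp a) y ↔ BRed x (.sum (.cons (.out a) Proc.zero .nil)) y) ∧
    (∀ (a : ℕ) (x y : Proc),
      Step x (.out a) y ↔ BRed x (.sum (.cons (.inp a) Proc.zero .nil)) y) ∧
    (∀ x y z : Proc, BRed x y z ↔
      ∃ (b : ℕ) (x' y' : Proc), CongP z (.par x' y') ∧
        ((Step x (.inp b) x' ∧ Step y (.out b) y') ∨
         (Step x (.out b) x' ∧ Step y (.inp b) y'))) := by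
  obtain ⟨sound1, sound2⟩ := ured_bred_sound
  have part4 : ∀ x y z : Proc, BRed x y z ↔ SP x y z :=
    fun x y z => ⟨fun h => sound2 h, bred_of_sp⟩
  refine ⟨fun x y => ⟨fun h => step_tau_ured h rfl, fun h => sound1 h⟩, ?_, ?_, part4⟩
  · intro a x y
    constructor
    · intro h
      have h0 : Step (.sum (.cons (.out a) Proc.zero .nil)) (.out a) Proc.zero :=
        Step.pre SMem.head
      exact BRed.str2 (BRed.sym (bred_of_steps h0 h)) (CongP.refl _) (CongP.refl _)
        (cong_zero_par y)
    · intro h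
      obtain ⟨b, x', y', hc, ⟨hx, hy⟩ | ⟨hx, hy⟩⟩ := sound2 h
      · have hA : Atom (.out a) (.sum (.cons (.out a) Proc.zero .nil)) :=
          Atom.base Null.nil
        obtain ⟨he, hn⟩ := Atom.step hy hA
        injection he with he; subst he
        refine Step.str (CongP.refl x) ?_ hx
        exact CongP.symm (CongP.trans hc
          (CongP.trans (CongP.par_congr (CongP.refl x') hn.congP) (CongP.par_zero x')))
      · have hA : Atom (.out a) (.sum (.cons (.out a) Proc.zero .nil)) :=
          Atom.base Null.nil
        obtain ⟨he, -⟩ := Atom.step hy hA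
        exact absurd he (by simp)
  · intro a x y
    constructor
    · intro h
      have h0 : Step (.sum (.cons (.inp a) Proc.zero .nil)) (.inp a) Proc.zero :=
        Step.pre SMem.head
      exact BRed.str2 (bred_of_steps h h0) (CongP.refl _) (CongP.refl _)
        (CongP.par_zero y)
    · intro h
      obtain ⟨b, x', y', hc, ⟨hx, hy⟩ | ⟨hx, hy⟩⟩ := sound2 h
      · have hA : Atom (.inp a) (.sum (.cons (.inp a) Proc.zero .nil)) :=
          Atom.base Null.nil
        obtain ⟨he, -⟩ := Atom.step hy hA
        exact absurd he (by simp)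
      · have hA : Atom (.inp a) (.sum (.cons (.inp a) Proc.zero .nil)) :=
          Atom.base Null.nil
        obtain ⟨he, hn⟩ := Atom.step hy hA
        injection he with he; subst he
        refine Step.str (CongP.refl x) ?_ hx
        exact CongP.symm (CongP.trans hc
          (CongP.trans (CongP.par_congr (CongP.refl x') hn.congP) (CongP.par_zero x')))

/-- Correspondence between the LTS and the dialgebra of CCS:
(i) `x →τ y` iff `x → y`; (ii) `x →a y` iff `(x, ā.0) → y`;
(iii) `x →ā y` iff `(x, a.0) → y`; (iv) `(x,y) → z` iff `z ≡ x' ∥ y'` for some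
complementary transitions `x →b x'`, `y →b̄ y'` (or vice versa). -/
theorem ccs_transition_reaction :
    (∀ x y : Proc, Step x .tau y ↔ URed x y) ∧
    (∀ (a : ℕ) (x y : Proc),
      Step x (.inp a) y ↔ BRed x (.sum (.cons (.out a) Proc.zero .nil)) y) ∧
    (∀ (a : ℕ) (x y : Proc),
      Step x (.out a) y ↔ BRed x (.sum (.cons (.inp a) Proc.zero .nil)) y) ∧
    (∀ x y z : Proc, BRed x y z ↔
      ∃ (b : ℕ) (x' y' : Proc), CongP z (.par x' y') ∧
        ((Step x (.inp b) x' ∧ Step y (.out b) y') ∨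
         (Step x (.out b) x' ∧ Step y (.inp b) y'))) := by
  exact ccs_transition_reaction'
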